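/- arXiv:2001.11963 — 3 statements merged into one kernel-verified Lean document; each statement's English description precedes it below -/
import Mathlib

section
/- Let C ≥ 2 and let V₁, V₂, … be an i.i.d. sequence of random vectors on a probability space, each almost surely a probability vector on Fin C with a unique maximal entry, with integrable coordinates, and with exchangeable distribution (invariant in law under every permutation of Fin C). Fix thresholds 0 ≤ β₁ < β₂ ≤ 1 and let V̂_k denote the error-corrected vector of V_k. Then almost surely, for every class i : Fin C, the ensemble average (1/K)·∑_{k=1}^{K} V̂_k i converges to 1/C as K → ∞, and likewise (1/K)·∑_{k=1}^{K} V_k i converges to 1/C; that is, for unknown or random input signals both the simple ensemble average algorithm and the ensemble average with error correction produce the uniform distribution in the limit of infinitely many dropout instances. -/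
open Finset MeasureTheory ProbabilityTheory Filter

/-- A probability vector on `Fin C`: nonnegative entries summing to 1. -/
def IsProbVec {C : ℕ} (v : Fin C → ℝ) : Prop :=
  (∀ i, 0 ≤ v i) ∧ ∑ i, v i = 1

/-- The error-corrected vector: one-hot at `m` if `v m ≥ β₂`, uniform if `v m < β₁`,
and `v` otherwise. -/
noncomputable def errCorrect {C : ℕ} (β₁ β₂ : ℝ) (v : Fin C → ℝ) (m : Fin C) :
    Fin C → ℝ :=
  if β₂ ≤ v m then (fun i => if i = m then 1 else 0)
  else if v m < β₁ then (fun _ => 1 / C)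
  else v

/-!
Both averaged quantities are of the form `g i (V k)` for a family `g` of functionals which is
equivariant under permutations of the classes, `g j (v ∘ σ) = g (σ j) v`, and whose values sum to
one over the classes. By exchangeability `E[g i (V 0)]` does not depend on `i`, hence equals
`1 / C`, and the strong law of large numbers turns this expectation into the almost sure limit of
the ensemble averages. The error-corrected vector is not itself such a functional, since it
depends on the index `M k` of the maximum; it is replaced by the functional that locates the
maximum through `⨆ j, v j`, which agrees with it wherever the maximum is unique.
-/

section Exchangeable

variable {Ω ι : Type*} [MeasurableSpace Ω] {μ : Measure Ω}

lemma integral_apply_perm_of_exchangeable {X : Ω → ι → ℝ} (hX : AEMeasurable X μ)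
    (hexch : ∀ σ : Equiv.Perm ι, μ.map (fun ω => X ω ∘ σ) = μ.map X)
    {g : ι → (ι → ℝ) → ℝ} (hg : ∀ j, Measurable (g j))
    (hequiv : ∀ (σ : Equiv.Perm ι) v j, g j (v ∘ σ) = g (σ j) v) (σ : Equiv.Perm ι) (j : ι) :
    ∫ ω, g (σ j) (X ω) ∂μ = ∫ ω, g j (X ω) ∂μ := by
  have hXσ : AEMeasurable (fun ω => X ω ∘ σ) μ :=
    (measurable_pi_lambda _ fun a => measurable_pi_apply (σ a)).comp_aemeasurable hX
  calc ∫ ω, g (σ j) (X ω) ∂μ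
      = ∫ ω, g j (X ω ∘ σ) ∂μ := by simp only [hequiv]
    _ = ∫ v, g j v ∂(μ.map fun ω => X ω ∘ σ) :=
        (integral_map hXσ (hg j).aestronglyMeasurable).symm
    _ = ∫ ω, g j (X ω) ∂μ := by
        rw [hexch σ, integral_map hX (hg j).aestronglyMeasurable]

lemma integral_eq_one_div_card_of_exchangeable [Fintype ι] [IsProbabilityMeasure μ] {X : Ω → ι → ℝ}
    (hX : AEMeasurable X μ)
    (hexch : ∀ σ : Equiv.Perm ι, μ.map (fun ω => X ω ∘ σ) = μ.map X)
    {g : ι → (ι → ℝ) → ℝ} (hg : ∀ j, Measurable (g j))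
    (hequiv : ∀ (σ : Equiv.Perm ι) v j, g j (v ∘ σ) = g (σ j) v)
    (hint : ∀ j, Integrable (fun ω => g j (X ω)) μ) (hsum : ∀ᵐ ω ∂μ, ∑ j, g j (X ω) = 1)
    (i : ι) :
    ∫ ω, g i (X ω) ∂μ = 1 / Fintype.card ι := by
  classical
  have hconst : ∀ j, ∫ ω, g j (X ω) ∂μ = ∫ ω, g i (X ω) ∂μ := fun j => by
    simpa only [Equiv.swap_apply_left] using
      integral_apply_perm_of_exchangeable hX hexch hg hequiv (Equiv.swap i j) i
  have htotal : ∑ j, ∫ ω, g j (X ω) ∂μ = 1 := by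
    rw [← integral_finsetSum _ fun j _ => hint j, integral_congr_ae hsum]
    simp
  simp only [hconst, sum_const, card_univ, nsmul_eq_mul] at htotal
  have : Nonempty ι := ⟨i⟩
  have hcard : (Fintype.card ι : ℝ) ≠ 0 := Nat.cast_ne_zero.2 Fintype.card_ne_zero
  rw [eq_div_iff hcard]
  linarith

end Exchangeable

section StrongLaw

variable {Ω E : Type*} [MeasurableSpace Ω] [MeasurableSpace E] {μ : Measure Ω}

lemma ae_tendsto_average_comp_of_iIndepFun {V : ℕ → Ω → E} (hindep : iIndepFun V μ)
    (hident : ∀ k, IdentDistrib (V k) (V 0) μ μ) {f : E → ℝ} (hf : Measurable f)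
    (hint : Integrable (fun ω => f (V 0 ω)) μ) :
    ∀ᵐ ω ∂μ, Tendsto (fun K : ℕ => (1 / K : ℝ) * ∑ k ∈ range K, f (V k ω)) atTop
      (nhds (∫ ω, f (V 0 ω) ∂μ)) := by
  have h := strong_law_ae_real (fun k ω => f (V k ω)) hint
    (fun k l hkl => (hindep.indepFun hkl).comp hf hf) (fun k => (hident k).comp hf)
  filter_upwards [h] with ω hω
  simpa only [one_div_mul_eq_div] using hω

variable {ι : Type*} [Fintype ι]

theorem ae_tendsto_average_of_iIndepFun_of_exchangeable [IsProbabilityMeasure μ]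
    {V : ℕ → Ω → ι → ℝ} (hindep : iIndepFun V μ) (hident : ∀ k, IdentDistrib (V k) (V 0) μ μ)
    (hexch : ∀ σ : Equiv.Perm ι, μ.map (fun ω => V 0 ω ∘ σ) = μ.map (V 0))
    {g : ι → (ι → ℝ) → ℝ} (hg : ∀ j, Measurable (g j))
    (hequiv : ∀ (σ : Equiv.Perm ι) v j, g j (v ∘ σ) = g (σ j) v)
    (hint : ∀ j, Integrable (fun ω => g j (V 0 ω)) μ) (hsum : ∀ᵐ ω ∂μ, ∑ j, g j (V 0 ω) = 1) :
    ∀ᵐ ω ∂μ, ∀ i, Tendsto (fun K : ℕ => (1 / K : ℝ) * ∑ k ∈ range K, g i (V k ω)) atTop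
      (nhds (1 / Fintype.card ι)) := by
  refine ae_all_iff.2 fun i => ?_
  rw [← integral_eq_one_div_card_of_exchangeable (hident 0).aemeasurable_fst hexch hg hequiv
    hint hsum i]
  exact ae_tendsto_average_comp_of_iIndepFun hindep hident (hg i) (hint i)

end StrongLaw

section ErrorCorrection

variable {C : ℕ} (β₁ β₂ : ℝ)

noncomputable def errCorrectSup (v : Fin C → ℝ) (i : Fin C) : ℝ :=
  if β₂ ≤ ⨆ j, v j then (if v i = ⨆ j, v j then 1 else 0)
  else if (⨆ j, v j) < β₁ then 1 / C
  else v i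

lemma measurable_errCorrectSup_apply (i : Fin C) :
    Measurable fun v : Fin C → ℝ => errCorrectSup β₁ β₂ v i := by
  have hsup : Measurable fun v : Fin C → ℝ => ⨆ j, v j := Measurable.iSup measurable_pi_apply
  unfold errCorrectSup
  refine Measurable.ite (measurableSet_le measurable_const hsup) ?_ ?_
  · exact Measurable.ite (measurableSet_eq_fun (measurable_pi_apply i) hsup)
      measurable_const measurable_const
  · exact Measurable.ite (measurableSet_lt hsup measurable_const)
      measurable_const (measurable_pi_apply i)

lemma errCorrectSup_comp_perm (σ : Equiv.Perm (Fin C)) (v : Fin C → ℝ)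
    (i : Fin C) : errCorrectSup β₁ β₂ (v ∘ σ) i = errCorrectSup β₁ β₂ v (σ i) := by
  simp only [errCorrectSup, Function.comp_apply, σ.iSup_comp (g := v)]

lemma ciSup_eq_of_forall_ne_lt {ι : Type*} [Finite ι] {v : ι → ℝ} {m : ι}
    (hm : ∀ i, i ≠ m → v i < v m) : ⨆ i, v i = v m := by
  have : Nonempty ι := ⟨m⟩
  refine le_antisymm (ciSup_le fun i => ?_) (le_ciSup (Set.finite_range v).bddAbove m)
  rcases eq_or_ne i m with rfl | hi
  exacts [le_rfl, (hm i hi).le]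

lemma errCorrectSup_eq_errCorrect {v : Fin C → ℝ} {m : Fin C}
    (hm : ∀ i, i ≠ m → v i < v m) : errCorrectSup β₁ β₂ v = errCorrect β₁ β₂ v m := by
  have hmax : ∀ j, v j = v m ↔ j = m := fun j =>
    ⟨fun h => by_contra fun hj => (hm j hj).ne h, fun h => h ▸ rfl⟩
  funext i
  simp only [errCorrectSup, errCorrect, ciSup_eq_of_forall_ne_lt hm, hmax]
  split_ifs <;> simp_all

lemma sum_errCorrect {v : Fin C → ℝ} (hv : IsProbVec v) (m : Fin C) :
    ∑ i, errCorrect β₁ β₂ v m i = 1 := by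
  have hC : (C : ℝ) ≠ 0 := Nat.cast_ne_zero.2 (Fin.pos m).ne'
  unfold errCorrect
  split_ifs
  · simp
  · simp [hC]
  · exact hv.2

lemma abs_errCorrect_le_one {v : Fin C → ℝ} (hv : IsProbVec v) (m i : Fin C) :
    |errCorrect β₁ β₂ v m i| ≤ 1 := by
  have hC : (1 : ℝ) ≤ C := Nat.one_le_cast.2 (Fin.pos m)
  have hvi : v i ≤ 1 := hv.2 ▸ single_le_sum (fun j _ => hv.1 j) (mem_univ i)
  unfold errCorrect
  split_ifs
  · dsimp only; split_ifs <;> norm_num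
  · rw [abs_of_nonneg (by positivity)]; exact div_le_one_of_le₀ hC (by positivity)
  · rwa [abs_of_nonneg (hv.1 i)]

end ErrorCorrection

theorem iid_exchangeable_ensemble_uniform_general {C : ℕ}
    {Ω : Type*} [MeasurableSpace Ω] (μ : Measure Ω) [IsProbabilityMeasure μ]
    (V : ℕ → Ω → Fin C → ℝ) (hVmeas : ∀ k, Measurable (V k))
    (M : ℕ → Ω → Fin C)
    (hprob : ∀ k, ∀ᵐ ω ∂μ, IsProbVec (V k ω) ∧
      ∀ i, i ≠ M k ω → V k ω i < V k ω (M k ω))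
    (hint : ∀ k i, Integrable (fun ω => V k ω i) μ)
    (hindep : iIndepFun V μ)
    (hident : ∀ k, Measure.map (V k) μ = Measure.map (V 0) μ)
    (hexch : ∀ k (σ : Equiv.Perm (Fin C)),
      Measure.map (fun ω => V k ω ∘ σ) μ = Measure.map (V k) μ)
    (β₁ β₂ : ℝ) :
    ∀ᵐ ω ∂μ, ∀ i : Fin C,
      Tendsto (fun K : ℕ =>
          (1 / K : ℝ) * ∑ k ∈ Finset.range K, errCorrect β₁ β₂ (V k ω) (M k ω) i)
        atTop (nhds (1 / C : ℝ)) ∧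
      Tendsto (fun K : ℕ => (1 / K : ℝ) * ∑ k ∈ Finset.range K, V k ω i)
        atTop (nhds (1 / C : ℝ)) := by
  have hiid : ∀ k, IdentDistrib (V k) (V 0) μ μ := fun k =>
    ⟨(hVmeas k).aemeasurable, (hVmeas 0).aemeasurable, hident k⟩
  have hbound : ∀ i, ∀ᵐ ω ∂μ, ‖errCorrectSup β₁ β₂ (V 0 ω) i‖ ≤ 1 := fun i =>
    (hprob 0).mono fun ω hω => by
      simpa only [errCorrectSup_eq_errCorrect β₁ β₂ hω.2, Real.norm_eq_abs] using
        abs_errCorrect_le_one β₁ β₂ hω.1 _ i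
  have hsum : ∀ᵐ ω ∂μ, ∑ i, errCorrectSup β₁ β₂ (V 0 ω) i = 1 :=
    (hprob 0).mono fun ω hω => by
      simpa only [errCorrectSup_eq_errCorrect β₁ β₂ hω.2] using sum_errCorrect β₁ β₂ hω.1 _
  have hcorr := ae_tendsto_average_of_iIndepFun_of_exchangeable hindep hiid (hexch 0)
    (measurable_errCorrectSup_apply β₁ β₂) (errCorrectSup_comp_perm β₁ β₂)
    (fun i => .of_bound ((measurable_errCorrectSup_apply β₁ β₂ i).comp
      (hVmeas 0)).aestronglyMeasurable 1 (hbound i)) hsum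
  have hraw := ae_tendsto_average_of_iIndepFun_of_exchangeable hindep hiid (hexch 0)
    (g := fun i v => v i) measurable_pi_apply (fun _ _ _ => rfl) (hint 0)
    ((hprob 0).mono fun ω hω => hω.1.2)
  filter_upwards [ae_all_iff.2 hprob, hcorr, hraw] with ω hω hcorrω hrawω i
  rw [Fintype.card_fin] at hcorrω hrawω
  refine ⟨(hcorrω i).congr fun K => ?_, hrawω i⟩
  simp only [errCorrectSup_eq_errCorrect β₁ β₂ (hω _).2]

theorem iid_exchangeable_ensemble_uniform {C : ℕ} (hC : 2 ≤ C)
    {Ω : Type*} [MeasurableSpace Ω] (μ : Measure Ω) [IsProbabilityMeasure μ]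
    (V : ℕ → Ω → Fin C → ℝ) (hVmeas : ∀ k, Measurable (V k))
    (M : ℕ → Ω → Fin C) (hMmeas : ∀ k, Measurable (M k))
    (hprob : ∀ k, ∀ᵐ ω ∂μ, IsProbVec (V k ω) ∧
      ∀ i, i ≠ M k ω → V k ω i < V k ω (M k ω))
    (hint : ∀ k i, Integrable (fun ω => V k ω i) μ)
    (hindep : iIndepFun V μ)
    (hident : ∀ k, Measure.map (V k) μ = Measure.map (V 0) μ)
    (hexch : ∀ k (σ : Equiv.Perm (Fin C)),
      Measure.map (fun ω => V k ω ∘ σ) μ = Measure.map (V k) μ)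
    (β₁ β₂ : ℝ) (hβ₁ : 0 ≤ β₁) (hβ₁₂ : β₁ < β₂) (hβ₂ : β₂ ≤ 1) :
    ∀ᵐ ω ∂μ, ∀ i : Fin C,
      Tendsto (fun K : ℕ =>
          (1 / K : ℝ) * ∑ k ∈ Finset.range K, errCorrect β₁ β₂ (V k ω) (M k ω) i)
        atTop (nhds (1 / C : ℝ)) ∧
      Tendsto (fun K : ℕ => (1 / K : ℝ) * ∑ k ∈ Finset.range K, V k ω i)
        atTop (nhds (1 / C : ℝ)) :=
  iid_exchangeable_ensemble_uniform_general μ V hVmeas M hprob hint hindep hident hexch β₁ β₂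
end

section
/- Let C ≥ 2 and let V be a random vector on a probability space that is almost surely a probability vector on Fin C with a unique maximal entry at a (random) index M, with integrable coordinates. Fix a correct class c : Fin C and thresholds 0 ≤ β₁ < β₂ ≤ 1, and let V̂ denote the error-corrected vector of V. Then E[V̂ c] − E[V c] = E[(1 − V c)·[M = c]·[V c ≥ β₂]] − E[(V c − 1/C)·[M = c]·[V c < β₁]] − E[(V c)·[M ≠ c]·[V M ≥ β₂]] + E[(1/C − V c)·[M ≠ c]·[V M < β₁]], where [P] denotes the indicator of the event P. -/
open Finset MeasureTheory ProbabilityTheory Filter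

/-! The identity already holds pointwise, for every vector `v` and every index `m`, once
`β₁ < β₂`: splitting on `m = c` and on the threshold regime of `v m`, the difference
`errCorrect β₁ β₂ v m c - v c` is exactly one of the four correction terms, or zero.
Taking expectations is then linearity of the integral; each correction term is integrable,
being an integrable function times indicators of measurable events. -/

theorem errCorrect_apply_eq {C : ℕ} {β₁ β₂ : ℝ} (hβ : β₁ < β₂) (v : Fin C → ℝ) (m c : Fin C) :
    errCorrect β₁ β₂ v m c = v c
      + (1 - v c) * (if m = c then 1 else 0) * (if β₂ ≤ v c then 1 else 0)
      - (v c - 1 / C) * (if m = c then 1 else 0) * (if v c < β₁ then 1 else 0)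
      - v c * (if m ≠ c then 1 else 0) * (if β₂ ≤ v m then 1 else 0)
      + (1 / C - v c) * (if m ≠ c then 1 else 0) * (if v m < β₁ then 1 else 0) := by
  unfold errCorrect
  rcases eq_or_ne c m with rfl | hcm <;> split_ifs <;> simp_all [eq_comm] <;> linarith

section

variable {Ω : Type*} [MeasurableSpace Ω] {μ : Measure Ω}

theorem MeasureTheory.Integrable.mul_ite_one_zero {f : Ω → ℝ} (hf : Integrable f μ)
    {p : Ω → Prop} [DecidablePred p] (hp : MeasurableSet {ω | p ω}) :
    Integrable (fun ω => f ω * if p ω then 1 else 0) μ :=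
  hf.mul_bdd (c := 1) (measurable_const.ite hp measurable_const).aestronglyMeasurable
    (.of_forall fun ω => by split_ifs <;> simp)

theorem integral_add_sub_sub_add {f g₁ g₂ g₃ g₄ : Ω → ℝ} (hf : Integrable f μ)
    (h₁ : Integrable g₁ μ) (h₂ : Integrable g₂ μ) (h₃ : Integrable g₃ μ)
    (h₄ : Integrable g₄ μ) :
    ∫ ω, f ω + g₁ ω - g₂ ω - g₃ ω + g₄ ω ∂μ =
      ∫ ω, f ω ∂μ + ∫ ω, g₁ ω ∂μ - ∫ ω, g₂ ω ∂μ - ∫ ω, g₃ ω ∂μ + ∫ ω, g₄ ω ∂μ := by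
  rw [integral_add (f := fun ω => f ω + g₁ ω - g₂ ω - g₃ ω) (((hf.add h₁).sub h₂).sub h₃) h₄,
    integral_sub (f := fun ω => f ω + g₁ ω - g₂ ω) ((hf.add h₁).sub h₂) h₃,
    integral_sub (f := fun ω => f ω + g₁ ω) (hf.add h₁) h₂, integral_add hf h₁]

end

theorem expected_mass_change_general {C : ℕ}
    {Ω : Type*} [MeasurableSpace Ω] (μ : Measure Ω) [IsProbabilityMeasure μ]
    (V : Ω → Fin C → ℝ) (hVmeas : Measurable V)
    (M : Ω → Fin C) (hMmeas : Measurable M)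
    (hint : ∀ i, Integrable (fun ω => V ω i) μ)
    (c : Fin C)
    (β₁ β₂ : ℝ) (hβ₁₂ : β₁ < β₂) :
    (∫ ω, errCorrect β₁ β₂ (V ω) (M ω) c ∂μ) - (∫ ω, V ω c ∂μ) =
      (∫ ω, (1 - V ω c) * (if M ω = c then 1 else 0)
          * (if β₂ ≤ V ω c then 1 else 0) ∂μ)
      - (∫ ω, (V ω c - 1 / C) * (if M ω = c then 1 else 0)
          * (if V ω c < β₁ then 1 else 0) ∂μ)
      - (∫ ω, (V ω c) * (if M ω ≠ c then 1 else 0)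
          * (if β₂ ≤ V ω (M ω) then 1 else 0) ∂μ)
      + (∫ ω, (1 / C - V ω c) * (if M ω ≠ c then 1 else 0)
          * (if V ω (M ω) < β₁ then 1 else 0) ∂μ) := by
  have hVc : Measurable fun ω => V ω c := (measurable_pi_apply c).comp hVmeas
  have hVM : Measurable fun ω => V ω (M ω) :=
    (measurable_from_prod_countable_left (f := fun p : (Fin C → ℝ) × Fin C => p.1 p.2)
      fun i => measurable_pi_apply i).comp
      (hVmeas.prodMk hMmeas)
  have hMc : MeasurableSet {ω | M ω = c} := hMmeas (measurableSet_singleton c)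
  rw [integral_congr_ae (.of_forall fun ω => errCorrect_apply_eq hβ₁₂ (V ω) (M ω) c),
    integral_add_sub_sub_add (hint c) ?_ ?_ ?_ ?_]
  · ring
  · exact (((integrable_const 1).sub (hint c)).mul_ite_one_zero hMc).mul_ite_one_zero
      (hVc measurableSet_Ici)
  · exact (((hint c).sub (integrable_const _)).mul_ite_one_zero hMc).mul_ite_one_zero
      (hVc measurableSet_Iio)
  · exact ((hint c).mul_ite_one_zero hMc.compl).mul_ite_one_zero (hVM measurableSet_Ici)
  · exact (((integrable_const _).sub (hint c)).mul_ite_one_zero hMc.compl).mul_ite_one_zero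
      (hVM measurableSet_Iio)

theorem expected_mass_change {C : ℕ} (hC : 2 ≤ C)
    {Ω : Type*} [MeasurableSpace Ω] (μ : Measure Ω) [IsProbabilityMeasure μ]
    (V : Ω → Fin C → ℝ) (hVmeas : Measurable V)
    (M : Ω → Fin C) (hMmeas : Measurable M)
    (hprob : ∀ᵐ ω ∂μ, IsProbVec (V ω) ∧ ∀ i, i ≠ M ω → V ω i < V ω (M ω))
    (hint : ∀ i, Integrable (fun ω => V ω i) μ)
    (c : Fin C)
    (β₁ β₂ : ℝ) (hβ₁ : 0 ≤ β₁) (hβ₁₂ : β₁ < β₂) (hβ₂ : β₂ ≤ 1) :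
    (∫ ω, errCorrect β₁ β₂ (V ω) (M ω) c ∂μ) - (∫ ω, V ω c ∂μ) =
      (∫ ω, (1 - V ω c) * (if M ω = c then 1 else 0)
          * (if β₂ ≤ V ω c then 1 else 0) ∂μ)
      - (∫ ω, (V ω c - 1 / C) * (if M ω = c then 1 else 0)
          * (if V ω c < β₁ then 1 else 0) ∂μ)
      - (∫ ω, (V ω c) * (if M ω ≠ c then 1 else 0)
          * (if β₂ ≤ V ω (M ω) then 1 else 0) ∂μ)
      + (∫ ω, (1 / C - V ω c) * (if M ω ≠ c then 1 else 0)
          * (if V ω (M ω) < β₁ then 1 else 0) ∂μ) :=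
  expected_mass_change_general μ V hVmeas M hMmeas hint c β₁ β₂ hβ₁₂
end

section
/- (Theorem 1.) Let C ≥ 2 and let V₁, V₂, … be an i.i.d. sequence of random vectors, each almost surely a probability vector on Fin C with a unique maximal entry at a (random) index M_k, with integrable coordinates. Fix a correct class c : Fin C and thresholds 0 ≤ β₁ < β₂ ≤ 1, and let V̂_k denote the error-corrected vector of V_k. Define Δ_c = E[(1 − V₁ c)·[M₁ = c]·[V₁ c ≥ β₂]] − E[(V₁ c − 1/C)·[M₁ = c]·[V₁ c < β₁]] − E[(V₁ c)·[M₁ ≠ c]·[V₁ M₁ ≥ β₂]] + E[(1/C − V₁ c)·[M₁ ≠ c]·[V₁ M₁ < β₁]], where [P] is the indicator of event P. If Δ_c > 0, then almost surely lim_{K→∞} (1/K)·∑_{k=1}^{K} V̂_k c > lim_{K→∞} (1/K)·∑_{k=1}^{K} V_k c; that is, in the limit of infinitely many dropout instances, the ensemble average with error correction assigns strictly more probability mass to the correct class c than the simple ensemble average. -/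
open Finset MeasureTheory ProbabilityTheory Filter

lemma abs_helper (x y : ℝ) (hy : 0 ≤ y) (hy1 : y ≤ 1) : |y - x| ≤ 1 + |x| :=
  (abs_sub y x).trans (by rw [abs_of_nonneg hy]; linarith)

theorem errCorrect_ensemble_improves {C : ℕ} (hC : 2 ≤ C)
    {Ω : Type*} [MeasurableSpace Ω] (μ : Measure Ω) [IsProbabilityMeasure μ]
    (V : ℕ → Ω → Fin C → ℝ) (hVmeas : ∀ k, Measurable (V k))
    (M : ℕ → Ω → Fin C) (hMmeas : ∀ k, Measurable (M k))
    (hprob : ∀ k, ∀ᵐ ω ∂μ, IsProbVec (V k ω) ∧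
      ∀ i, i ≠ M k ω → V k ω i < V k ω (M k ω))
    (hint : ∀ k i, Integrable (fun ω => V k ω i) μ)
    (hindep : iIndepFun V μ)
    (hident : ∀ k, Measure.map (V k) μ = Measure.map (V 0) μ)
    (c : Fin C)
    (β₁ β₂ : ℝ) (hβ₁ : 0 ≤ β₁) (hβ₁₂ : β₁ < β₂) (hβ₂ : β₂ ≤ 1)
    (Δ : ℝ)
    (hΔdef : Δ =
      (∫ ω, (1 - V 0 ω c) * (if M 0 ω = c then 1 else 0)
          * (if β₂ ≤ V 0 ω c then 1 else 0) ∂μ)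
      - (∫ ω, (V 0 ω c - 1 / C) * (if M 0 ω = c then 1 else 0)
          * (if V 0 ω c < β₁ then 1 else 0) ∂μ)
      - (∫ ω, (V 0 ω c) * (if M 0 ω ≠ c then 1 else 0)
          * (if β₂ ≤ V 0 ω (M 0 ω) then 1 else 0) ∂μ)
      + (∫ ω, (1 / C - V 0 ω c) * (if M 0 ω ≠ c then 1 else 0)
          * (if V 0 ω (M 0 ω) < β₁ then 1 else 0) ∂μ))
    (hΔpos : 0 < Δ) :
    ∃ a b : ℝ, b < a ∧
      ∀ᵐ ω ∂μ,
        Tendsto (fun K : ℕ =>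
            (1 / K : ℝ) * ∑ k ∈ Finset.range K, errCorrect β₁ β₂ (V k ω) (M k ω) c)
          atTop (nhds a) ∧
        Tendsto (fun K : ℕ => (1 / K : ℝ) * ∑ k ∈ Finset.range K, V k ω c)
          atTop (nhds b) := by
  haveI : NeZero C := ⟨by omega⟩
  have hne : (Finset.univ : Finset (Fin C)).Nonempty := Finset.univ_nonempty
  have hCr : (2:ℝ) ≤ (C:ℝ) := by exact_mod_cast hC
  have hCinv : (0:ℝ) ≤ 1 / (C:ℝ) ∧ 1 / (C:ℝ) ≤ 1 := by
    constructor
    · positivity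
    · rw [div_le_one (by linarith)]; linarith
  -- the max function and the measurable surrogate g for the error-corrected value
  set mx : (Fin C → ℝ) → ℝ := fun v => Finset.univ.sup' hne v with hmxdef
  have mx_meas : Measurable mx := by
    have : mx = Finset.univ.sup' hne (fun i (v : Fin C → ℝ) => v i) := by
      funext v; rw [Finset.sup'_apply]
    rw [this]
    exact Finset.measurable_sup' hne fun i _ => measurable_pi_apply i
  set g : (Fin C → ℝ) → ℝ := fun v =>
    if β₂ ≤ mx v then (if v c = mx v then 1 else 0)
    else if mx v < β₁ then 1 / (C:ℝ) else v c with hgdef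
  have g_meas : Measurable g := by
    apply Measurable.ite (measurableSet_le measurable_const mx_meas)
    · exact Measurable.ite (measurableSet_eq_fun (measurable_pi_apply c) mx_meas)
        measurable_const measurable_const
    · exact Measurable.ite (measurableSet_lt mx_meas measurable_const)
        measurable_const (measurable_pi_apply c)
  -- g agrees with errCorrect at the unique argmax
  have key : ∀ (v : Fin C → ℝ) (m : Fin C), (∀ i, i ≠ m → v i < v m) →
      g v = errCorrect β₁ β₂ v m c := by
    intro v m hm
    have hmx : mx v = v m := by
      apply le_antisymm
      · refine Finset.sup'_le hne v fun i _ => ?_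
        rcases eq_or_ne i m with h | h
        · simp [h]
        · exact (hm i h).le
      · exact Finset.le_sup' v (Finset.mem_univ m)
    have hiff : (v c = v m) ↔ c = m := by
      constructor
      · intro h
        by_contra hc
        exact absurd h (ne_of_lt (hm c hc))
      · intro h; rw [h]
    simp only [hgdef, errCorrect, hmx]
    by_cases h2 : β₂ ≤ v m
    · rw [if_pos h2, if_pos h2]
      simp [hiff]
    · rw [if_neg h2, if_neg h2]
      by_cases h1 : v m < β₁
      · rw [if_pos h1, if_pos h1]
      · rw [if_neg h1, if_neg h1]
  -- identical distribution / independence after composing with measurable maps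
  have hidV : ∀ k, IdentDistrib (V k) (V 0) μ μ := fun k =>
    ⟨(hVmeas k).aemeasurable, (hVmeas 0).aemeasurable, hident k⟩
  have hpair : ∀ (f : (Fin C → ℝ) → ℝ), Measurable f →
      Pairwise (Function.onFun (IndepFun · · μ) (fun k ω => f (V k ω))) := by
    intro f hf i j hij
    exact (hindep.indepFun hij).comp hf hf
  have hid : ∀ (f : (Fin C → ℝ) → ℝ), Measurable f → ∀ k,
      IdentDistrib (fun ω => f (V k ω)) (fun ω => f (V 0 ω)) μ μ := by
    intro f hf k
    exact (hidV k).comp hf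
  -- integrability
  have hdom : Integrable (fun ω => 1 + |V 0 ω c|) μ :=
    (integrable_const 1).add (hint 0 c).abs
  have hdom_norm : ∀ ω, ‖(1:ℝ) + |V 0 ω c|‖ = 1 + |V 0 ω c| := fun ω =>
    Real.norm_of_nonneg (by positivity)
  have hYint : Integrable (fun ω => g (V 0 ω)) μ := by
    refine hdom.mono ((g_meas.comp (hVmeas 0)).aestronglyMeasurable) ?_
    filter_upwards with ω
    rw [Real.norm_eq_abs, hdom_norm]
    simp only [hgdef]
    have h0 := abs_nonneg (V 0 ω c)
    split_ifs
    · rw [abs_one]; linarith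
    · rw [abs_zero]; linarith
    · rw [abs_of_nonneg hCinv.1]; linarith [hCinv.2]
    · exact le_add_of_nonneg_left zero_le_one
  -- strong law of large numbers for both sequences
  have hY_slln := strong_law_ae_real (fun k ω => g (V k ω)) hYint
    (hpair g g_meas) (hid g g_meas)
  have hX_slln := strong_law_ae_real (fun k ω => V k ω c) (hint 0 c)
    (hpair (fun v => v c) (measurable_pi_apply c)) (hid (fun v => v c) (measurable_pi_apply c))
  -- measurability of the four integrands
  have hVc_meas : Measurable fun ω => V 0 ω c := (measurable_pi_apply c).comp (hVmeas 0)
  have hMc : MeasurableSet {ω | M 0 ω = c} := (hMmeas 0) (measurableSet_singleton c)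
  have hVM_meas : Measurable fun ω => V 0 ω (M 0 ω) := by
    have h : (fun ω => V 0 ω (M 0 ω))
        = fun ω => ∑ j : Fin C, if M 0 ω = j then V 0 ω j else 0 := by
      funext ω; simp
    rw [h]
    refine Finset.measurable_sum _ fun j _ => Measurable.ite ((hMmeas 0) (measurableSet_singleton j))
      ((measurable_pi_apply j).comp (hVmeas 0)) measurable_const
  have hind1 : Measurable fun ω => (if M 0 ω = c then (1:ℝ) else 0) :=
    Measurable.ite hMc measurable_const measurable_const
  have hind1' : Measurable fun ω => (if M 0 ω ≠ c then (1:ℝ) else 0) :=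
    Measurable.ite hMc.compl measurable_const measurable_const
  have hindb2 : Measurable fun ω => (if β₂ ≤ V 0 ω c then (1:ℝ) else 0) :=
    Measurable.ite (measurableSet_le measurable_const hVc_meas) measurable_const measurable_const
  have hindb1 : Measurable fun ω => (if V 0 ω c < β₁ then (1:ℝ) else 0) :=
    Measurable.ite (measurableSet_lt hVc_meas measurable_const) measurable_const measurable_const
  have hindM2 : Measurable fun ω => (if β₂ ≤ V 0 ω (M 0 ω) then (1:ℝ) else 0) :=
    Measurable.ite (measurableSet_le measurable_const hVM_meas) measurable_const measurable_const
  have hindM1 : Measurable fun ω => (if V 0 ω (M 0 ω) < β₁ then (1:ℝ) else 0) :=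
    Measurable.ite (measurableSet_lt hVM_meas measurable_const) measurable_const measurable_const
  have hbound : ∀ (y : ℝ), 0 ≤ y → y ≤ 1 → ∀ (x a b : ℝ), (a = 0 ∨ a = 1) → (b = 0 ∨ b = 1) →
      |(y - x) * a * b| ≤ 1 + |x| := by
    intro y h0 h1 x a b ha hb
    have h0x := abs_nonneg x
    rcases ha with ha | ha <;> rcases hb with hb | hb <;>
      simp [ha, hb, abs_helper x y h0 h1] <;> linarith
  have hi1 : Integrable (fun ω => (1 - V 0 ω c) * (if M 0 ω = c then 1 else 0)
      * (if β₂ ≤ V 0 ω c then 1 else 0)) μ := by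
    refine hdom.mono (((measurable_const.sub hVc_meas).mul hind1).mul
      hindb2).aestronglyMeasurable ?_
    filter_upwards with ω
    rw [Real.norm_eq_abs, hdom_norm]
    exact hbound 1 zero_le_one le_rfl _ _ _
      (by split_ifs <;> simp) (by split_ifs <;> simp)
  have hi2 : Integrable (fun ω => (V 0 ω c - 1 / C) * (if M 0 ω = c then 1 else 0)
      * (if V 0 ω c < β₁ then 1 else 0)) μ := by
    refine hdom.mono (((hVc_meas.sub measurable_const).mul hind1).mul
      hindb1).aestronglyMeasurable ?_
    filter_upwards with ω
    rw [Real.norm_eq_abs, hdom_norm]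
    have : |(V 0 ω c - 1 / C) * (if M 0 ω = c then (1:ℝ) else 0) * (if V 0 ω c < β₁ then (1:ℝ) else 0)|
        = |(1 / C - V 0 ω c) * (if M 0 ω = c then (1:ℝ) else 0) * (if V 0 ω c < β₁ then (1:ℝ) else 0)| := by
      rw [← abs_neg]; ring_nf
    rw [this]
    exact hbound (1/C) hCinv.1 hCinv.2 _ _ _
      (by split_ifs <;> simp) (by split_ifs <;> simp)
  have hi3 : Integrable (fun ω => (V 0 ω c) * (if M 0 ω ≠ c then 1 else 0)
      * (if β₂ ≤ V 0 ω (M 0 ω) then 1 else 0)) μ := by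
    refine hdom.mono ((hVc_meas.mul hind1').mul hindM2).aestronglyMeasurable ?_
    filter_upwards with ω
    rw [Real.norm_eq_abs, hdom_norm]
    have : |(V 0 ω c) * (if M 0 ω ≠ c then (1:ℝ) else 0) * (if β₂ ≤ V 0 ω (M 0 ω) then (1:ℝ) else 0)|
        = |(0 - V 0 ω c) * (if M 0 ω ≠ c then (1:ℝ) else 0) * (if β₂ ≤ V 0 ω (M 0 ω) then (1:ℝ) else 0)| := by
      rw [← abs_neg]; ring_nf
    rw [this]
    exact hbound 0 le_rfl zero_le_one _ _ _
      (by split_ifs <;> simp) (by split_ifs <;> simp)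
  have hi4 : Integrable (fun ω => (1 / C - V 0 ω c) * (if M 0 ω ≠ c then 1 else 0)
      * (if V 0 ω (M 0 ω) < β₁ then 1 else 0)) μ := by
    refine hdom.mono (((measurable_const.sub hVc_meas).mul hind1').mul
      hindM1).aestronglyMeasurable ?_
    filter_upwards with ω
    rw [Real.norm_eq_abs, hdom_norm]
    exact hbound (1/C) hCinv.1 hCinv.2 _ _ _
      (by split_ifs <;> simp) (by split_ifs <;> simp)
  -- the pointwise identity: the four-term integrand equals errCorrect minus the plain value
  have hpt : ∀ ω,
      (1 - V 0 ω c) * (if M 0 ω = c then 1 else 0) * (if β₂ ≤ V 0 ω c then 1 else 0)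
      - (V 0 ω c - 1 / C) * (if M 0 ω = c then 1 else 0) * (if V 0 ω c < β₁ then 1 else 0)
      - (V 0 ω c) * (if M 0 ω ≠ c then 1 else 0) * (if β₂ ≤ V 0 ω (M 0 ω) then 1 else 0)
      + (1 / C - V 0 ω c) * (if M 0 ω ≠ c then 1 else 0) * (if V 0 ω (M 0 ω) < β₁ then 1 else 0)
      = errCorrect β₁ β₂ (V 0 ω) (M 0 ω) c - V 0 ω c := by
    intro ω
    rcases eq_or_ne (M 0 ω) c with hm | hm
    · rw [hm]
      simp only [errCorrect]
      by_cases h2 : β₂ ≤ V 0 ω c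
      · simp only [if_pos h2, if_neg (show ¬ V 0 ω c < β₁ by linarith)]
        simp
      · simp only [if_neg h2]
        by_cases h1 : V 0 ω c < β₁
        · simp only [if_pos h1]
          simp
        · simp only [if_neg h1]
          simp
    · simp only [errCorrect, if_neg hm, ne_eq, hm, not_false_eq_true, if_pos,
        if_true, if_false]
      have hcm : ¬ (c = M 0 ω) := fun h => hm h.symm
      by_cases h2 : β₂ ≤ V 0 ω (M 0 ω)
      · simp only [if_pos h2, if_neg (show ¬ V 0 ω (M 0 ω) < β₁ by linarith), if_neg hcm]
        ring
      · simp only [if_neg h2]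
        by_cases h1 : V 0 ω (M 0 ω) < β₁
        · simp only [if_pos h1]
          ring
        · simp only [if_neg h1]
          ring
  -- errCorrect value is a.e. equal to g ∘ V 0, hence integrable
  have hgW : (fun ω => g (V 0 ω)) =ᵐ[μ]
      (fun ω => errCorrect β₁ β₂ (V 0 ω) (M 0 ω) c) := by
    filter_upwards [hprob 0] with ω hω
    exact key _ _ hω.2
  have hWint : Integrable (fun ω => errCorrect β₁ β₂ (V 0 ω) (M 0 ω) c) μ :=
    hYint.congr hgW
  -- Δ equals a - b
  have h12 : Integrable (fun ω => (1 - V 0 ω c) * (if M 0 ω = c then 1 else 0)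
      * (if β₂ ≤ V 0 ω c then 1 else 0)
      - (V 0 ω c - 1 / C) * (if M 0 ω = c then 1 else 0)
      * (if V 0 ω c < β₁ then 1 else 0)) μ := hi1.sub hi2
  have h123 : Integrable (fun ω => (1 - V 0 ω c) * (if M 0 ω = c then 1 else 0)
      * (if β₂ ≤ V 0 ω c then 1 else 0)
      - (V 0 ω c - 1 / C) * (if M 0 ω = c then 1 else 0)
      * (if V 0 ω c < β₁ then 1 else 0)
      - (V 0 ω c) * (if M 0 ω ≠ c then 1 else 0)
      * (if β₂ ≤ V 0 ω (M 0 ω) then 1 else 0)) μ := h12.sub hi3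
  have hΔab : Δ = (∫ ω, g (V 0 ω) ∂μ) - ∫ ω, V 0 ω c ∂μ := by
    have h1 : (∫ ω, (errCorrect β₁ β₂ (V 0 ω) (M 0 ω) c - V 0 ω c) ∂μ) = Δ := by
      calc ∫ ω, (errCorrect β₁ β₂ (V 0 ω) (M 0 ω) c - V 0 ω c) ∂μ
          = ∫ ω, ((1 - V 0 ω c) * (if M 0 ω = c then 1 else 0)
              * (if β₂ ≤ V 0 ω c then 1 else 0)
            - (V 0 ω c - 1 / C) * (if M 0 ω = c then 1 else 0)
              * (if V 0 ω c < β₁ then 1 else 0)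
            - (V 0 ω c) * (if M 0 ω ≠ c then 1 else 0)
              * (if β₂ ≤ V 0 ω (M 0 ω) then 1 else 0)
            + (1 / C - V 0 ω c) * (if M 0 ω ≠ c then 1 else 0)
              * (if V 0 ω (M 0 ω) < β₁ then 1 else 0)) ∂μ :=
            integral_congr_ae (Filter.Eventually.of_forall fun ω => (hpt ω).symm)
        _ = Δ := by
            rw [integral_add h123 hi4, integral_sub h12 hi3, integral_sub hi1 hi2, hΔdef]
    rw [← h1, integral_sub hWint (hint 0 c), integral_congr_ae hgW]
  refine ⟨∫ ω, g (V 0 ω) ∂μ, ∫ ω, V 0 ω c ∂μ, by linarith, ?_⟩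
  filter_upwards [hY_slln, hX_slln, ae_all_iff.2 hprob] with ω hYω hXω hgood
  constructor
  · refine Tendsto.congr (fun K => ?_) hYω
    rw [one_div, inv_mul_eq_div]
    congr 1
    exact Finset.sum_congr rfl fun k _ => key _ _ (hgood k).2
  · refine Tendsto.congr (fun K => ?_) hXω
    rw [one_div, inv_mul_eq_div]
end
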